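/- Let h = {h_m}_{m∈ℕ} be a countable collection of locally integrable functions on ℝⁿ, and suppose M_{i,p,s}h(x₀) < ∞ for some point x₀. Then there exists a collection P = {P_m} of polynomials with deg P_m < i such that for every cube Q, the function x ↦ (Σ_m |h_m(x) - P_m(x)|²)^{1/2} belongs to L^p(Q); i.e., h - P ∈ L^p_loc(ℝⁿ, ℓ²). -/

import Mathlib

open MeasureTheory ENNReal

/-- An axis-parallel cube in `ℝⁿ` with lower corner `c` and side length `L`. -/
def cube (n : ℕ) (c : Fin n → ℝ) (L : ℝ) : Set (Fin n → ℝ) :=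
  Set.univ.pi fun d => Set.Icc (c d) (c d + L)

/-- `q` is a polynomial of degree strictly less than `i` (`𝒫₀ = {0}`). -/
def DegLT (n i : ℕ) (q : MvPolynomial (Fin n) ℝ) : Prop :=
  ∀ d ∈ q.support, (d.sum fun _ e => e) < i

/-- The Morrey–Campanato expression for a collection `h` on the cube with corner `c`,
side `L`, relative to a collection `P` of polynomials. -/
noncomputable def campExpr (n : ℕ) (p s : ℝ) (h : ℕ → (Fin n → ℝ) → ℝ)
    (P : ℕ → MvPolynomial (Fin n) ℝ) (c : Fin n → ℝ) (L : ℝ) : ℝ≥0∞ :=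
  (ENNReal.ofReal (L ^ n)) ^ (-(s / (n : ℝ))) *
    ((ENNReal.ofReal (L ^ n))⁻¹ *
      ∫⁻ x in cube n c L,
        (∑' m, ((‖h m x - MvPolynomial.eval x (P m)‖₊ : ℝ≥0∞)) ^ 2) ^ (p / 2)) ^ (1 / p)

/-!
Let `P` witness the bound on `M_{i,p,s}h(x₀)` for the unit cube `Q₀` at `x₀`. Given a cube `Q`,
choose a cube `Q' ⊇ Q ∪ Q₀` and a witness `P'` for `Q'`. Since `h - P` and `h - P'` lie in
`L^p(Q₀, ℓ²)`, the family of polynomials `P - P'` has finite pointwise `ℓ²`-norm on a set `S` of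
full measure in `Q₀`. A nonzero polynomial cannot vanish almost everywhere on `Q₀`, so the
evaluations at points of `S` span the dual of the finite-dimensional space of polynomials of
degree `< i`; finitely many of them suffice, and interpolating at those points bounds the
`ℓ²`-norm of `P - P'` uniformly on the compact cube `Q'`. Then `h - P = (h - P') + (P' - P)` lies
in `L^p(Q', ℓ²)`.
-/

open MvPolynomial Submodule
open scoped NNReal

noncomputable def sumSqNorm {ι E : Type*} [SeminormedAddCommGroup E] (a : ι → E) : ℝ≥0∞ :=
  ∑' m, (‖a m‖₊ : ℝ≥0∞) ^ 2

section SumSqNorm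

variable {ι E : Type*} [SeminormedAddCommGroup E]

lemma sumSqNorm_le_two_mul_add {a b c : ι → E} (h : ∀ m, ‖c m‖ ≤ ‖a m‖ + ‖b m‖) :
    sumSqNorm c ≤ 2 * (sumSqNorm a + sumSqNorm b) := by
  rw [sumSqNorm, sumSqNorm, sumSqNorm, ← ENNReal.tsum_add, ← ENNReal.tsum_mul_left]
  refine ENNReal.tsum_le_tsum fun m => ?_
  have hc : ‖c m‖₊ ≤ ‖a m‖₊ + ‖b m‖₊ := h m
  have hm : ‖c m‖₊ ^ 2 ≤ 2 * (‖a m‖₊ ^ 2 + ‖b m‖₊ ^ 2) :=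
    (pow_le_pow_left₀ bot_le hc 2).trans add_sq_le
  exact_mod_cast hm

lemma sumSqNorm_sum_smul_le {X 𝕜 : Type*} [NormedField 𝕜] [NormedSpace 𝕜 E] (F : Finset X)
    (c : X → 𝕜) (a : X → ι → E) :
    sumSqNorm (fun m => ∑ x ∈ F, c x • a x m) ≤
      (∑ x ∈ F, (‖c x‖₊ : ℝ≥0∞) ^ 2) * ∑ x ∈ F, sumSqNorm (a x) := by
  simp only [sumSqNorm]
  rw [← Summable.tsum_finsetSum fun _ _ => ENNReal.summable, ← ENNReal.tsum_mul_left]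
  refine ENNReal.tsum_le_tsum fun m => ?_
  have hm : ‖∑ x ∈ F, c x • a x m‖₊ ^ 2 ≤ (∑ x ∈ F, ‖c x‖₊ ^ 2) * ∑ x ∈ F, ‖a x m‖₊ ^ 2 :=
    calc ‖∑ x ∈ F, c x • a x m‖₊ ^ 2 ≤ (∑ x ∈ F, ‖c x‖₊ * ‖a x m‖₊) ^ 2 := by
          gcongr
          exact (nnnorm_sum_le _ _).trans (Finset.sum_le_sum fun x _ => nnnorm_smul_le _ _)
      _ ≤ _ := Finset.sum_mul_sq_le_sq_mul_sq _ _ _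
  exact_mod_cast hm

lemma aemeasurable_sumSqNorm {α : Type*} [MeasurableSpace α] {μ : Measure α} [Countable ι]
    {f : ι → α → E} (hf : ∀ m, AEStronglyMeasurable (f m) μ) :
    AEMeasurable (fun x => sumSqNorm fun m => f m x) μ :=
  AEMeasurable.tsum fun m => (hf m).enorm.pow_const 2

end SumSqNorm

section LIntegral

variable {α : Type*} [MeasurableSpace α] {μ : Measure α}

lemma ae_ne_top_of_lintegral_rpow_lt_top {g : α → ℝ≥0∞} {r : ℝ} (hg : AEMeasurable g μ)
    (hr : 0 < r) (hint : ∫⁻ x, g x ^ r ∂μ < ⊤) : ∀ᵐ x ∂μ, g x ≠ ⊤ := by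
  filter_upwards [ae_lt_top' (hg.pow_const r) hint.ne] with x hx
  exact ((ENNReal.rpow_lt_top_iff_of_pos hr).1 hx).ne

lemma lintegral_rpow_lt_top_of_le_mul_add [IsFiniteMeasure μ] {f g : α → ℝ≥0∞} {C B : ℝ≥0∞}
    {r : ℝ} (hr : 0 ≤ r) (hC : C ≠ ⊤) (hB : B ≠ ⊤) (hf : ∫⁻ x, f x ^ r ∂μ < ⊤)
    (hgf : ∀ᵐ x ∂μ, g x ≤ C * f x + B) : ∫⁻ x, g x ^ r ∂μ < ⊤ := by
  set K := LpAddConst (ENNReal.ofReal r)⁻¹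
  have hK : K ≠ ⊤ := (LpAddConst_lt_top _).ne
  have hCr := rpow_ne_top_of_nonneg hr hC
  have hBr := rpow_ne_top_of_nonneg hr hB
  calc ∫⁻ x, g x ^ r ∂μ ≤ ∫⁻ x, K * C ^ r * f x ^ r + K * B ^ r ∂μ := by
        refine lintegral_mono_ae (hgf.mono fun x hx => ?_)
        calc g x ^ r ≤ (C * f x + B) ^ r := ENNReal.rpow_le_rpow hx hr
          _ ≤ K * ((C * f x) ^ r + B ^ r) := rpow_add_le_mul_rpow_add_rpow' _ _ hr
          _ = _ := by rw [ENNReal.mul_rpow_of_nonneg _ _ hr]; ring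
    _ = K * C ^ r * ∫⁻ x, f x ^ r ∂μ + K * B ^ r * μ Set.univ := by
        rw [lintegral_add_right _ measurable_const, lintegral_const,
          lintegral_const_mul' _ _ (mul_ne_top hK hCr)]
    _ < ⊤ := add_lt_top.2 ⟨mul_lt_top (by finiteness) hf, by finiteness⟩

end LIntegral

theorem Subspace.span_eq_top_iff_forall_apply_eq_zero {K V : Type*} [Field K] [AddCommGroup V]
    [Module K V] [FiniteDimensional K V] {s : Set (Module.Dual K V)} :
    span K s = ⊤ ↔ ∀ v, (∀ f ∈ s, f v = 0) → v = 0 := by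
  rw [← Subspace.dualCoannihilator_dualAnnihilator_eq (W := span K s), dualAnnihilator_eq_top_iff,
    eq_bot_iff, ← SetLike.coe_subset_coe, coe_dualCoannihilator_span]
  simp [Set.subset_def]

theorem Module.Dual.exists_finset_eq_sum_smul {K V X : Type*} [Field K] [AddCommGroup V]
    [Module K V] [FiniteDimensional K V] (ev : X → Module.Dual K V) {S : Set X}
    (hS : ∀ v, (∀ x ∈ S, ev x v = 0) → v = 0) :
    ∃ (F : Finset X) (b : F → V), ↑F ⊆ S ∧ ∀ v, v = ∑ x : F, ev x v • b x := by
  classical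
  have hspan : span K (ev '' S) = ⊤ :=
    Subspace.span_eq_top_iff_forall_apply_eq_zero.2 (by simpa using hS)
  obtain ⟨t, hts, -, htspan, -⟩ := exists_finset_span_eq_linearIndepOn K (ev '' S)
  obtain ⟨F, hFS, rfl⟩ := Finset.subset_set_image_iff.1 hts
  have hF : ∀ v, (∀ x ∈ F, ev x v = 0) → v = 0 := by
    have h := htspan.trans hspan
    rw [Finset.coe_image, Subspace.span_eq_top_iff_forall_apply_eq_zero] at h
    simpa using h
  let T : V →ₗ[K] F → K := LinearMap.pi fun x => ev x
  obtain ⟨G, hG⟩ := T.exists_leftInverse_of_injective <| LinearMap.ker_eq_bot'.2 fun v hv =>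
    hF v fun x hx => congrFun hv ⟨x, hx⟩
  refine ⟨F, fun x => G (Pi.single x 1), hFS, fun v => ?_⟩
  calc v = G (∑ x : F, Pi.single x (T v x)) := by
        rw [Finset.univ_sum_single, ← LinearMap.comp_apply, hG, LinearMap.id_apply]
    _ = ∑ x : F, ev x v • G (Pi.single x 1) := by
        refine (map_sum G _ _).trans (Finset.sum_congr rfl fun x _ => ?_)
        rw [← map_smul, ← Pi.single_smul, smul_eq_mul, mul_one]
        rfl

namespace MvPolynomial

variable {σ : Type*}

theorem eq_zero_of_ae_eval_eq_zero [Fintype σ] {q : MvPolynomial σ ℝ} {A : Set (σ → ℝ)}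
    (hA : (interior A).Nonempty) (h : ∀ᵐ x ∂volume.restrict A, eval x q = 0) : q = 0 := by
  obtain ⟨x, hx⟩ := hA
  obtain ⟨r, hr, hball⟩ := Metric.isOpen_iff.1 isOpen_interior x hx
  have hzero : Set.EqOn (fun y => eval y q) 0 (Metric.ball x r) :=
    Measure.eqOn_open_of_ae_eq
      (ae_restrict_of_ae_restrict_of_subset (hball.trans interior_subset) h)
      Metric.isOpen_ball (continuous_eval q).continuousOn continuousOn_const
  refine funext_set (fun i => Metric.ball (x i) r) (fun i => ?_) fun y hy => ?_
  · rw [Real.ball_eq_Ioo]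
    exact Set.Ioo_infinite (by linarith)
  · simpa using hzero (by rwa [ball_pi x hr])

theorem exists_sumSqNorm_eval_le_of_isCompact {ι : Type*} (V : Submodule ℝ (MvPolynomial σ ℝ))
    [FiniteDimensional ℝ V] {q : ι → MvPolynomial σ ℝ} (hq : ∀ m, q m ∈ V) {S : Set (σ → ℝ)}
    (hS : ∀ v ∈ V, (∀ x ∈ S, eval x v = 0) → v = 0)
    (hfin : ∀ x ∈ S, sumSqNorm (fun m => eval x (q m)) ≠ ⊤) {K : Set (σ → ℝ)}
    (hK : IsCompact K) : ∃ B ≠ ⊤, ∀ y ∈ K, sumSqNorm (fun m => eval y (q m)) ≤ B := by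
  let ev : (σ → ℝ) → Module.Dual ℝ V := fun x => (aeval x).toLinearMap.comp V.subtype
  obtain ⟨F, b, hFS, hb⟩ := Module.Dual.exists_finset_eq_sum_smul ev (S := S) fun v hv =>
    Subtype.ext (hS v v.2 (by simpa [ev] using hv))
  have heval : ∀ y m, eval y (q m) = ∑ x : F, eval y (b x : MvPolynomial σ ℝ) • eval x (q m) := by
    intro y m
    simpa [ev, map_sum, mul_comm] using
      congrArg (fun v : V => eval y (v : MvPolynomial σ ℝ)) (hb ⟨q m, hq m⟩)
  set w : (σ → ℝ) → ℝ≥0 := fun y => ∑ x : F, ‖eval y (b x : MvPolynomial σ ℝ)‖₊ ^ 2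
  have hw : Continuous w := continuous_finsetSum _ fun x _ => (continuous_eval _).nnnorm.pow 2
  obtain ⟨C, hC⟩ := bddAbove_def.1 (hK.bddAbove_image hw.continuousOn)
  refine ⟨C * ∑ x : F, sumSqNorm (fun m => eval x (q m)),
    mul_ne_top coe_ne_top (sum_ne_top.2 fun x _ => hfin x (hFS x.2)), fun y hy => ?_⟩
  calc sumSqNorm (fun m => eval y (q m))
      = sumSqNorm (fun m => ∑ x : F, eval y (b x : MvPolynomial σ ℝ) • eval x (q m)) := by
        simp_rw [← heval]
    _ ≤ (∑ x : F, (‖eval y (b x : MvPolynomial σ ℝ)‖₊ : ℝ≥0∞) ^ 2) *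
          ∑ x : F, sumSqNorm (fun m => eval x (q m)) := sumSqNorm_sum_smul_le _ _ _
    _ ≤ _ := by
        gcongr
        exact_mod_cast hC _ ⟨y, hy, rfl⟩

end MvPolynomial

section Cube

variable {n : ℕ}

theorem isCompact_cube (c : Fin n → ℝ) (L : ℝ) : IsCompact (cube n c L) :=
  isCompact_univ_pi fun _ => isCompact_Icc

theorem mem_cube_self (c : Fin n → ℝ) {L : ℝ} (hL : 0 ≤ L) : c ∈ cube n c L :=
  fun _ _ => ⟨le_rfl, le_add_of_nonneg_right hL⟩

theorem interior_cube_nonempty (c : Fin n → ℝ) {L : ℝ} (hL : 0 < L) :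
    (interior (cube n c L)).Nonempty := by
  rw [cube, interior_pi_set Set.finite_univ]
  refine ⟨fun d => c d + L / 2, fun d _ => ?_⟩
  simp only [interior_Icc, Set.mem_Ioo]
  constructor <;> linarith

theorem exists_cube_superset {s : Set (Fin n → ℝ)} (hs : Bornology.IsBounded s) :
    ∃ c L, 0 < L ∧ s ⊆ cube n c L := by
  obtain ⟨R, hR⟩ := (Metric.isBounded_iff_subset_closedBall 0).1 hs
  refine ⟨fun _ => -(|R| + 1), 2 * (|R| + 1), by positivity, fun x hx d _ => ?_⟩
  have hxd : |x d| ≤ |R| + 1 :=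
    calc |x d| = ‖x d‖ := rfl
      _ ≤ ‖x‖ := norm_le_pi_norm x d
      _ ≤ |R| + 1 := by
        have := mem_closedBall_zero_iff.1 (hR hx)
        linarith [le_abs_self R]
  constructor <;> linarith [abs_le.1 hxd]

end Cube

theorem lintegral_lt_top_of_campExpr_ne_top {n : ℕ} {p s : ℝ} {h : ℕ → (Fin n → ℝ) → ℝ}
    {P : ℕ → MvPolynomial (Fin n) ℝ} {c : Fin n → ℝ} {L : ℝ} (hp : 0 < p) (hL : 0 < L)
    (hcamp : campExpr n p s h P c L ≠ ⊤) :
    ∫⁻ x in cube n c L, sumSqNorm (fun m => h m x - eval x (P m)) ^ (p / 2) < ⊤ := by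
  refine lt_top_iff_ne_top.2 fun htop => hcamp ?_
  have hLn : 0 < L ^ n := pow_pos hL n
  have hpow : ENNReal.ofReal (L ^ n) ^ (-(s / n)) ≠ 0 := by
    rw [ENNReal.ofReal_rpow_of_pos hLn]
    exact (ENNReal.ofReal_pos.2 (Real.rpow_pos_of_pos hLn _)).ne'
  have hinv : (ENNReal.ofReal (L ^ n))⁻¹ ≠ 0 := ENNReal.inv_ne_zero.2 ENNReal.ofReal_ne_top
  unfold sumSqNorm at htop
  rw [campExpr, htop, mul_top hinv, top_rpow_of_pos (by positivity), mul_top hpow]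

theorem DegLT.mem_restrictTotalDegree {n i : ℕ} {q : MvPolynomial (Fin n) ℝ} (hq : DegLT n i q) :
    q ∈ restrictTotalDegree (Fin n) ℝ i :=
  (MvPolynomial.mem_restrictTotalDegree _ _ _).2 (Finset.sup_le fun d hd => (hq d hd).le)

theorem lintegral_sumSqNorm_sub_eval_lt_top {σ ι : Type*} [Fintype σ] [Countable ι]
    (V : Submodule ℝ (MvPolynomial σ ℝ)) [FiniteDimensional ℝ V]
    {h : ι → (σ → ℝ) → ℝ} {P P' : ι → MvPolynomial σ ℝ} (hP : ∀ m, P m ∈ V)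
    (hP' : ∀ m, P' m ∈ V) {A A' : Set (σ → ℝ)} (hA : (interior A).Nonempty) (hAA' : A ⊆ A')
    (hA' : IsCompact A') (hh : ∀ m, AEStronglyMeasurable (h m) (volume.restrict A)) {r : ℝ}
    (hr : 0 < r) (hPA : ∫⁻ x in A, sumSqNorm (fun m => h m x - eval x (P m)) ^ r < ⊤)
    (hP'A' : ∫⁻ x in A', sumSqNorm (fun m => h m x - eval x (P' m)) ^ r < ⊤) :
    ∫⁻ x in A', sumSqNorm (fun m => h m x - eval x (P m)) ^ r < ⊤ := by
  set g := fun (Q : ι → MvPolynomial σ ℝ) x => sumSqNorm (fun m => h m x - eval x (Q m))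
  have hmeas (Q : ι → MvPolynomial σ ℝ) : AEMeasurable (g Q) (volume.restrict A) :=
    aemeasurable_sumSqNorm fun m => (hh m).sub (continuous_eval (Q m)).aestronglyMeasurable
  have hfinA : ∀ᵐ x ∂volume.restrict A, g P x ≠ ⊤ ∧ g P' x ≠ ⊤ :=
    (ae_ne_top_of_lintegral_rpow_lt_top (hmeas P) hr hPA).and
      (ae_ne_top_of_lintegral_rpow_lt_top (hmeas P') hr ((lintegral_mono_set hAA').trans_lt hP'A'))
  have hdiff (x) : sumSqNorm (fun m => eval x (P m - P' m)) ≤ 2 * (g P' x + g P x) :=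
    sumSqNorm_le_two_mul_add fun m => by
      rw [map_sub, ← sub_sub_sub_cancel_left _ _ (h m x)]
      exact norm_sub_le _ _
  obtain ⟨B, hB, hBA'⟩ := exists_sumSqNorm_eval_le_of_isCompact V
    (fun m => sub_mem (hP m) (hP' m)) (S := {x | g P x ≠ ⊤ ∧ g P' x ≠ ⊤})
    (fun v _ hv => eq_zero_of_ae_eval_eq_zero hA (hfinA.mono hv))
    (fun x hx => ne_top_of_le_ne_top (by finiteness [hx.1, hx.2]) (hdiff x)) hA'
  have : IsFiniteMeasure (volume.restrict A') := isFiniteMeasure_restrict.2 hA'.measure_ne_top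
  refine lintegral_rpow_lt_top_of_le_mul_add (C := 2) (B := 2 * B) hr.le (by finiteness)
    (by finiteness) hP'A'
    (ae_restrict_of_forall_mem hA'.measurableSet fun y hy => ?_)
  calc g P y ≤ 2 * (g P' y + sumSqNorm (fun m => eval y (P m - P' m))) :=
        sumSqNorm_le_two_mul_add fun m => by
          rw [map_sub, ← sub_sub_sub_cancel_right (h m y) _ (eval y (P' m))]
          exact norm_sub_le _ _
    _ ≤ 2 * g P' y + 2 * B := by
        rw [mul_add]
        gcongr
        exact hBA' y hy

theorem stmt6_general (n i : ℕ) (p s : ℝ) (hp : 1 ≤ p)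
    (h : ℕ → (Fin n → ℝ) → ℝ) (hloc : ∀ m, LocallyIntegrable (h m) volume)
    (x₀ : Fin n → ℝ)
    (hfin : ∃ M : ℝ≥0∞, M ≠ ⊤ ∧ ∀ (c : Fin n → ℝ) (L : ℝ), 0 < L → x₀ ∈ cube n c L →
      ∃ P : ℕ → MvPolynomial (Fin n) ℝ, (∀ m, DegLT n i (P m)) ∧
        campExpr n p s h P c L ≤ M) :
    ∃ P : ℕ → MvPolynomial (Fin n) ℝ, (∀ m, DegLT n i (P m)) ∧
      ∀ (c : Fin n → ℝ) (L : ℝ), 0 < L →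
        (∫⁻ x in cube n c L,
          (∑' m, ((‖h m x - MvPolynomial.eval x (P m)‖₊ : ℝ≥0∞)) ^ 2) ^ (p / 2)) < ⊤ := by
  obtain ⟨M, hM, hMcamp⟩ := hfin
  have hp0 : 0 < p := by linarith
  obtain ⟨P, hPdeg, hPM⟩ := hMcamp x₀ 1 one_pos (mem_cube_self x₀ zero_le_one)
  refine ⟨P, hPdeg, fun c L hL => ?_⟩
  obtain ⟨c', L', hL', hsub⟩ := exists_cube_superset
    ((isCompact_cube c L).isBounded.union (isCompact_cube x₀ 1).isBounded)
  obtain ⟨P', hP'deg, hP'M⟩ := hMcamp c' L' hL' (hsub (Or.inr (mem_cube_self x₀ zero_le_one)))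
  refine (lintegral_mono_set (Set.subset_union_left.trans hsub)).trans_lt ?_
  exact lintegral_sumSqNorm_sub_eval_lt_top (restrictTotalDegree (Fin n) ℝ i)
    (fun m => (hPdeg m).mem_restrictTotalDegree) (fun m => (hP'deg m).mem_restrictTotalDegree)
    (interior_cube_nonempty x₀ one_pos) (Set.subset_union_right.trans hsub) (isCompact_cube c' L')
    (fun m => (hloc m).aestronglyMeasurable.restrict) (by positivity)
    (lintegral_lt_top_of_campExpr_ne_top hp0 one_pos (ne_top_of_le_ne_top hM hPM))
    (lintegral_lt_top_of_campExpr_ne_top hp0 hL' (ne_top_of_le_ne_top hM hP'M))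

/-- If `M_{i,p,s}h(x₀) < ∞` at some point `x₀`, then there is a collection `P` of
polynomials of degree `< i` such that `h - P ∈ L^p_loc(ℝⁿ, ℓ²)`. -/
theorem stmt6 (n i : ℕ) (hn : 0 < n) (p s : ℝ) (hp : 1 ≤ p)
    (h : ℕ → (Fin n → ℝ) → ℝ) (hloc : ∀ m, LocallyIntegrable (h m) volume)
    (x₀ : Fin n → ℝ)
    (hfin : ∃ M : ℝ≥0∞, M ≠ ⊤ ∧ ∀ (c : Fin n → ℝ) (L : ℝ), 0 < L → x₀ ∈ cube n c L →
      ∃ P : ℕ → MvPolynomial (Fin n) ℝ, (∀ m, DegLT n i (P m)) ∧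
        campExpr n p s h P c L ≤ M) :
    ∃ P : ℕ → MvPolynomial (Fin n) ℝ, (∀ m, DegLT n i (P m)) ∧
      ∀ (c : Fin n → ℝ) (L : ℝ), 0 < L →
        (∫⁻ x in cube n c L,
          (∑' m, ((‖h m x - MvPolynomial.eval x (P m)‖₊ : ℝ≥0∞)) ^ 2) ^ (p / 2)) < ⊤ :=
  stmt6_general n i p s hp h hloc x₀ hfin
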